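/- For n ≥ q with q dividing n, b_n - n*b_{n-1} = (q-1)*b_{n-q} + q*(-1)^{n/q}; for n ≥ q with q not dividing n, b_n - n*b_{n-1} = (q-1)*b_{n-q}. -/

import Mathlib

open Finset

/-- `a` with `a+1`, ..., `a+q-1` (0-indexed) form an adjacent `q`-cycle of `π`. -/
def isAdjCycle (q : ℕ) {n : ℕ} (π : Equiv.Perm (Fin n)) (a : ℕ) : Prop :=
  a + q ≤ n ∧ ∀ i : Fin n, a ≤ i.val → i.val < a + q →
    (π i).val = if i.val = a + q - 1 then a else i.val + 1

instance (q n : ℕ) (π : Equiv.Perm (Fin n)) (a : ℕ) : Decidable (isAdjCycle q π a) := by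
  unfold isAdjCycle; infer_instance

/-- The number of adjacent `q`-cycles of a permutation of `{1,...,n}`. -/
def adjCycleCount (q : ℕ) {n : ℕ} (π : Equiv.Perm (Fin n)) : ℕ :=
  ((Finset.range n).filter (isAdjCycle q π)).card

/-- `numAqC q n k` = number of permutations of `{1,...,n}` with exactly `k` adjacent `q`-cycles. -/
def numAqC (q n k : ℕ) : ℕ :=
  (Finset.univ.filter (fun π : Equiv.Perm (Fin n) => adjCycleCount q π = k)).card

def b (q n : ℕ) : ℕ := numAqC q n 0

/-!
By inclusion–exclusion over the sets `S` of adjacent `q`-cycles a permutation is required to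
contain, `b m = ∑ S, (-1) ^ #S * (m - q * #S)!`, where `S` runs over the packings of pairwise
disjoint blocks `[a, a + q)` into `{0, …, m - 1}`; there are `(m - j * (q - 1)).choose j` packings
with `j` blocks. Pascal's rule and the absorption identity for these binomial coefficients make
the `j`-th terms of `b n - n * b (n - 1) - (q - 1) * b (n - q)` cancel, except when `j * q = n`,
where the unique packing covering `{0, …, n - 1}` leaves `q * (-1) ^ j`.
-/

lemma choose_sub_mul_pred_eq_zero {q m j : ℕ} (h : m < j * q) :
    (m - j * (q - 1)).choose j = 0 := by
  have hj : 0 < j := Nat.pos_of_ne_zero (by rintro rfl; simp at h)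
  have hq : 0 < q := Nat.pos_of_ne_zero (by rintro rfl; simp at h)
  have := Nat.le_mul_of_pos_right j hq
  rw [Nat.mul_sub_one]
  exact Nat.choose_eq_zero_of_lt (by omega)

lemma choose_sub_mul_pred_succ {q n : ℕ} (hq : 1 ≤ q) (hn : q ≤ n) (j : ℕ) :
    (n - (j + 1) * (q - 1)).choose (j + 1)
      = (n - 1 - (j + 1) * (q - 1)).choose (j + 1) + (n - q - j * (q - 1)).choose j := by
  have e : (j + 1) * (q - 1) = j * (q - 1) + q - 1 := by rw [Nat.succ_mul]; omega
  rw [e]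
  rcases Nat.lt_or_ge (j * (q - 1) + q - 1) n with h | h
  · rw [show n - (j * (q - 1) + q - 1) = (n - q - j * (q - 1)) + 1 by omega,
      Nat.choose_succ_succ', show n - 1 - (j * (q - 1) + q - 1) = n - q - j * (q - 1) by omega,
      add_comm]
  · rcases j with _ | j
    · omega
    · rw [show n - q - (j + 1) * (q - 1) = 0 by omega, show n - (_ + q - 1) = 0 by omega,
        show n - 1 - (_ + q - 1) = 0 by omega]
      simp

lemma succ_mul_choose_sub_mul_pred {q : ℕ} (hq : 1 ≤ q) (n j : ℕ) :
    (j + 1) * (n - 1 - (j + 1) * (q - 1)).choose (j + 1)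
      = (n - q * (j + 1)) * (n - q - j * (q - 1)).choose j := by
  have e : (j + 1) * (q - 1) = j * (q - 1) + q - 1 := by rw [Nat.succ_mul]; omega
  have e' : q * (j + 1) = j * (q - 1) + j + q := by
    rw [mul_comm, Nat.succ_mul, Nat.mul_sub_one]; have := Nat.le_mul_of_pos_right j hq; omega
  rw [e, show n - 1 - (j * (q - 1) + q - 1) = n - q - j * (q - 1) by omega, mul_comm,
    Nat.choose_succ_right_eq, mul_comm, e']
  congr 1
  omega

def IsBlockPacking (q n : ℕ) (S : Finset ℕ) : Prop :=
  (∀ a ∈ S, a + q ≤ n) ∧ ∀ a ∈ S, ∀ b ∈ S, a < b → a + q ≤ b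

instance (q n : ℕ) : DecidablePred (IsBlockPacking q n) := fun _ => by
  unfold IsBlockPacking; infer_instance

def blockPackings (q n : ℕ) : Finset (Finset ℕ) :=
  (range n).powerset.filter (IsBlockPacking q n)

section blockPackings

variable {q n : ℕ}

lemma mem_blockPackings (hq : 1 ≤ q) {S : Finset ℕ} :
    S ∈ blockPackings q n ↔ IsBlockPacking q n S := by
  simp only [blockPackings, mem_filter, mem_powerset, and_iff_right_iff_imp]
  intro h a ha
  have := h.1 a ha
  rw [mem_range]
  omega

lemma notMem_of_mem_blockPackings (hq : 1 ≤ q) {T : Finset ℕ} (hT : T ∈ blockPackings q n) :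
    n ∉ T := fun h => by
  have := ((mem_blockPackings hq).1 hT).1 n h
  omega

lemma blockPackings_of_lt (hq : 1 ≤ q) (h : n < q) : blockPackings q n = {∅} := by
  ext S
  rw [mem_blockPackings hq, mem_singleton]
  constructor
  · rintro ⟨hbd, -⟩
    exact eq_empty_of_forall_notMem fun a ha => by
      have := hbd a ha
      omega
  · rintro rfl
    simp [IsBlockPacking]

lemma filter_notMem_blockPackings (hq : 1 ≤ q) (hn : q ≤ n) :
    (blockPackings q n).filter (n - q ∉ ·) = blockPackings q (n - 1) := by
  ext S
  simp only [mem_filter, mem_blockPackings hq, IsBlockPacking]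
  constructor
  · rintro ⟨⟨hbd, hsep⟩, hS⟩
    refine ⟨fun a ha => ?_, hsep⟩
    have : a ≠ n - q := fun h => hS (h ▸ ha)
    have := hbd a ha
    omega
  · rintro ⟨hbd, hsep⟩
    refine ⟨⟨fun a ha => (hbd a ha).trans (Nat.sub_le n 1), hsep⟩, fun h => ?_⟩
    have := hbd _ h
    omega

lemma filter_mem_blockPackings (hq : 1 ≤ q) (hn : q ≤ n) :
    (blockPackings q n).filter (n - q ∈ ·)
      = (blockPackings q (n - q)).image (insert (n - q)) := by
  ext S
  simp only [mem_filter, mem_image, mem_blockPackings hq, IsBlockPacking]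
  constructor
  · rintro ⟨⟨hbd, hsep⟩, hS⟩
    have hlt : ∀ a ∈ S.erase (n - q), a + q ≤ n - q := fun a ha => by
      obtain ⟨hne, ha⟩ := mem_erase.1 ha
      rcases Nat.lt_or_gt_of_ne hne with h | h
      · have := hsep a ha _ hS h
        omega
      · have := hsep _ hS a ha h
        have := hbd a ha
        omega
    exact ⟨S.erase (n - q), ⟨hlt, fun a ha b hb => hsep a (mem_of_mem_erase ha) b
      (mem_of_mem_erase hb)⟩, insert_erase hS⟩
  · rintro ⟨T, ⟨hbd, hsep⟩, rfl⟩
    refine ⟨⟨fun a ha => ?_, fun a ha b hb hab => ?_⟩, mem_insert_self _ _⟩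
    · rcases mem_insert.1 ha with rfl | ha
      · omega
      · have := hbd a ha
        omega
    · rcases mem_insert.1 ha with rfl | ha <;> rcases mem_insert.1 hb with rfl | hb
      · omega
      · have := hbd b hb
        omega
      · have := hbd a ha
        omega
      · exact hsep a ha b hb hab

lemma sum_blockPackings_eq {M : Type*} [AddCommMonoid M] (hq : 1 ≤ q) (hn : q ≤ n)
    (f : Finset ℕ → M) :
    ∑ S ∈ blockPackings q n, f S
      = ∑ S ∈ blockPackings q (n - 1), f S
        + ∑ T ∈ blockPackings q (n - q), f (insert (n - q) T) := by
  rw [← sum_filter_not_add_sum_filter _ (n - q ∈ ·), filter_notMem_blockPackings hq hn,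
    filter_mem_blockPackings hq hn, sum_image]
  intro S hS T hT h
  rw [← erase_insert (notMem_of_mem_blockPackings hq hS), h,
    erase_insert (notMem_of_mem_blockPackings hq hT)]

lemma card_filter_blockPackings_card_eq (hq : 1 ≤ q) (n j : ℕ) :
    #{S ∈ blockPackings q n | #S = j} = (n - j * (q - 1)).choose j := by
  induction n using Nat.strong_induction_on generalizing j with
  | _ n ih =>
  rcases j with _ | j
  · simp_rw [card_eq_zero, filter_eq', Nat.choose_zero_right]
    rw [if_pos ((mem_blockPackings hq).2 (by simp [IsBlockPacking])), card_singleton]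
  rcases Nat.lt_or_ge n q with h | h
  · rw [blockPackings_of_lt hq h, choose_sub_mul_pred_eq_zero (by nlinarith)]
    simp
  · rw [card_filter, sum_blockPackings_eq hq h, ← card_filter]
    have hins : ∀ T ∈ blockPackings q (n - q),
        (if #(insert (n - q) T) = j + 1 then 1 else 0) = if #T = j then 1 else 0 := by
      intro T hT
      simp [card_insert_of_notMem (notMem_of_mem_blockPackings hq hT)]
    rw [sum_congr rfl hins, ← card_filter, ih _ (by omega), ih _ (by omega),
      choose_sub_mul_pred_succ hq h]

end blockPackings

lemma card_filter_perm_eq_factorial {α : Type*} [Fintype α] [DecidableEq α] (σ : Equiv.Perm α)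
    (U : Finset α) (p : Equiv.Perm α → Prop) [DecidablePred p]
    (hp : ∀ π, p π ↔ ∀ i ∈ U, π i = σ i) :
    #{π | p π} = (Fintype.card α - #U).factorial := by
  rw [← Fintype.card_subtype, ← card_compl, ← Fintype.card_coe, ← Fintype.card_perm]
  refine Fintype.card_congr ((Equiv.subtypeEquiv (Equiv.mulLeft σ⁻¹) fun π => ?_).trans
    (Equiv.Perm.subtypeEquivSubtypePerm (· ∈ Uᶜ)).symm)
  simp only [hp, Equiv.coe_mulLeft, Equiv.Perm.mul_apply, mem_compl, not_not,
    Equiv.Perm.inv_eq_iff_eq]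

def InBlocks (q : ℕ) (S : Finset ℕ) (i : ℕ) : Prop := ∃ a ∈ S, a ≤ i ∧ i < a + q

instance (q : ℕ) (S : Finset ℕ) : DecidablePred (InBlocks q S) := fun _ => by
  unfold InBlocks; infer_instance

def blockRot (q : ℕ) (S : Finset ℕ) (i : ℕ) : ℕ :=
  if q ≤ i + 1 ∧ i + 1 - q ∈ S then i + 1 - q else if InBlocks q S i then i + 1 else i

lemma blockRot_of_not_inBlocks {q : ℕ} {S : Finset ℕ} (hq : 1 ≤ q) {i : ℕ}
    (h : ¬InBlocks q S i) : blockRot q S i = i := by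
  unfold blockRot
  rw [if_neg h, if_neg]
  rintro ⟨-, hb⟩
  exact h ⟨_, hb, by omega, by omega⟩

section blockRot

variable {q : ℕ} {S : Finset ℕ} (hsep : ∀ a ∈ S, ∀ b ∈ S, a < b → a + q ≤ b)
include hsep

lemma eq_of_mem_blocks {a b i : ℕ} (ha : a ∈ S) (hb : b ∈ S) (hai : a ≤ i) (hia : i < a + q)
    (hbi : b ≤ i) (hib : i < b + q) : a = b := by
  rcases lt_trichotomy a b with h | h | h
  · have := hsep a ha b hb h; omega
  · exact h
  · have := hsep b hb a ha h; omega

lemma blockRot_of_mem {a i : ℕ} (ha : a ∈ S) (hai : a ≤ i) (hia : i < a + q) :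
    blockRot q S i = if i = a + q - 1 then a else i + 1 := by
  unfold blockRot
  by_cases hlast : i = a + q - 1
  · rw [if_pos hlast, if_pos ⟨by omega, by rwa [show i + 1 - q = a by omega]⟩]
    omega
  · have hnot : ¬(q ≤ i + 1 ∧ i + 1 - q ∈ S) := fun ⟨_, hb⟩ => hlast (by
      have := eq_of_mem_blocks hsep hb ha (by omega) (by omega) hai hia
      omega)
    rw [if_neg hlast, if_neg hnot, if_pos ⟨a, ha, hai, hia⟩]

lemma blockRot_mem_block {a i : ℕ} (ha : a ∈ S) (hai : a ≤ i) (hia : i < a + q) :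
    a ≤ blockRot q S i ∧ blockRot q S i < a + q := by
  rw [blockRot_of_mem hsep ha hai hia]
  split_ifs <;> omega

lemma blockRot_injective (hq : 1 ≤ q) : Function.Injective (blockRot q S) := by
  intro i j hij
  by_cases hi : InBlocks q S i
  · obtain ⟨a, ha, hai, hia⟩ := hi
    have hrot := blockRot_mem_block hsep ha hai hia
    have hj : InBlocks q S j := by
      by_contra hj
      rw [blockRot_of_not_inBlocks hq hj] at hij
      exact hj ⟨a, ha, hij ▸ hrot⟩
    obtain ⟨b, hb, hbj, hjb⟩ := hj
    have hrot' := blockRot_mem_block hsep hb hbj hjb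
    obtain rfl : a = b :=
      eq_of_mem_blocks hsep ha hb hrot.1 hrot.2 (hij ▸ hrot'.1) (hij ▸ hrot'.2)
    rw [blockRot_of_mem hsep ha hai hia, blockRot_of_mem hsep ha hbj hjb] at hij
    split_ifs at hij <;> omega
  · have hj : ¬InBlocks q S j := fun ⟨b, hb, hbj, hjb⟩ => hi ⟨b, hb, by
      simpa only [← hij, blockRot_of_not_inBlocks hq hi] using
        blockRot_mem_block hsep hb hbj hjb⟩
    rwa [blockRot_of_not_inBlocks hq hi, blockRot_of_not_inBlocks hq hj] at hij

variable {n : ℕ} (hbd : ∀ a ∈ S, a + q ≤ n)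
include hbd

lemma exists_perm_val_eq_blockRot (hq : 1 ≤ q) :
    ∃ σ : Equiv.Perm (Fin n), ∀ i, (σ i : ℕ) = blockRot q S i := by
  have hlt (i : Fin n) : blockRot q S i < n := by
    by_cases hi : InBlocks q S i
    · obtain ⟨a, ha, hai, hia⟩ := hi
      have := blockRot_mem_block hsep ha hai hia
      have := hbd a ha
      omega
    · rw [blockRot_of_not_inBlocks hq hi]
      exact i.isLt
  have hinj : Function.Injective fun i : Fin n => (⟨blockRot q S i, hlt i⟩ : Fin n) :=
    fun i j h => Fin.ext (blockRot_injective hsep hq (Fin.mk.inj_iff.1 h))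
  exact ⟨Equiv.ofBijective _ (Finite.injective_iff_bijective.1 hinj), fun _ => rfl⟩

lemma card_filter_inBlocks : #{i : Fin n | InBlocks q S i} = q * #S := by
  have hmap : (univ.filter fun i : Fin n => InBlocks q S i).map Fin.valEmbedding
      = S.biUnion fun a => Ico a (a + q) := by
    ext m
    simp only [mem_map, mem_filter, mem_univ, true_and, Fin.valEmbedding_apply, mem_biUnion,
      mem_Ico]
    constructor
    · rintro ⟨i, ⟨a, ha, hai, hia⟩, rfl⟩
      exact ⟨a, ha, hai, hia⟩
    · rintro ⟨a, ha, hai, hia⟩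
      exact ⟨⟨m, by have := hbd a ha; omega⟩, ⟨a, ha, hai, hia⟩, rfl⟩
  rw [← card_map, hmap, card_biUnion]
  · simp [mul_comm]
  · intro a ha b hb hne
    rw [Function.onFun, disjoint_left]
    intro m hma hmb
    rw [mem_Ico] at hma hmb
    exact hne (eq_of_mem_blocks hsep ha hb hma.1 hma.2 hmb.1 hmb.2)

end blockRot

lemma isBlockPacking_of_forall_isAdjCycle {q n : ℕ} (hq : 1 ≤ q) {S : Finset ℕ}
    {π : Equiv.Perm (Fin n)} (h : ∀ a ∈ S, isAdjCycle q π a) : IsBlockPacking q n S := by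
  refine ⟨fun a ha => (h a ha).1, fun a ha c hc hac => ?_⟩
  by_contra hlt
  have hi : a + q - 1 < n := by have := (h a ha).1; omega
  -- the last point of the block at `a` is sent to `a` by one cycle and to `a + q` by the other
  set i : Fin n := ⟨a + q - 1, hi⟩
  have hival : (i : ℕ) = a + q - 1 := rfl
  have h₁ := (h a ha).2 i (by omega) (by omega)
  have h₂ := (h c hc).2 i (by omega) (by omega)
  rw [if_pos hival] at h₁
  rw [if_neg (by omega)] at h₂
  omega

lemma card_filter_forall_isAdjCycle {q n : ℕ} (hq : 1 ≤ q) (S : Finset ℕ) :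
    #{π : Equiv.Perm (Fin n) | ∀ a ∈ S, isAdjCycle q π a}
      = if IsBlockPacking q n S then (n - q * #S).factorial else 0 := by
  split_ifs with hS
  · obtain ⟨hbd, hsep⟩ := hS
    obtain ⟨σ, hσ⟩ := exists_perm_val_eq_blockRot hsep hbd hq
    rw [card_filter_perm_eq_factorial σ {i | InBlocks q S i}, card_filter_inBlocks hsep hbd,
      Fintype.card_fin]
    intro π
    simp only [mem_filter, mem_univ, true_and, isAdjCycle, Fin.ext_iff, hσ]
    constructor
    · rintro h i ⟨a, ha, hai, hia⟩
      rw [(h a ha).2 i hai hia, blockRot_of_mem hsep ha hai hia]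
    · exact fun h a ha => ⟨hbd a ha, fun i hai hia => by
        rw [h i ⟨a, ha, hai, hia⟩, blockRot_of_mem hsep ha hai hia]⟩
  · rw [card_eq_zero, filter_eq_empty_iff]
    exact fun π _ h => hS (isBlockPacking_of_forall_isAdjCycle hq h)

lemma b_eq_sum_blockPackings {q : ℕ} (hq : 1 ≤ q) (n : ℕ) :
    (b q n : ℤ) = ∑ S ∈ blockPackings q n, (-1) ^ #S * ((n - q * #S).factorial : ℤ) := by
  have hb : b q n
      = #((range n).inf fun a =>
          ({π : Equiv.Perm (Fin n) | isAdjCycle q π a} : Finset _)ᶜ) := by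
    unfold b numAqC adjCycleCount
    congr 1
    ext π
    simp [mem_inf, filter_eq_empty_iff]
  rw [hb, inclusion_exclusion_card_inf_compl, blockPackings, sum_filter]
  refine sum_congr rfl fun S _ => ?_
  have hinf : S.inf (fun a => ({π : Equiv.Perm (Fin n) | isAdjCycle q π a} : Finset _))
      = ({π | ∀ a ∈ S, isAdjCycle q π a} : Finset (Equiv.Perm (Fin n))) := by
    ext π
    simp [mem_inf]
  rw [hinf, card_filter_forall_isAdjCycle hq]
  split_ifs <;> simp

def incExcTerm (q m j : ℕ) : ℤ := (-1) ^ j * (m - j * (q - 1)).choose j * (m - q * j).factorial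

lemma b_eq_sum_incExcTerm {q m K : ℕ} (hq : 1 ≤ q) (hK : m < K) :
    (b q m : ℤ) = ∑ j ∈ range K, incExcTerm q m j := by
  rw [b_eq_sum_blockPackings hq, ← sum_fiberwise_of_maps_to (g := card) (t := range K)]
  · refine sum_congr rfl fun j _ => ?_
    rw [sum_congr rfl fun S hS => by rw [(mem_filter.1 hS).2], sum_const,
      card_filter_blockPackings_card_eq hq, nsmul_eq_mul, incExcTerm]
    ring
  · intro S hS
    rw [mem_range]
    exact (card_le_card (mem_powerset.1 (mem_filter.1 hS).1)).trans_lt (by simpa using hK)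

lemma incExcTerm_zero_sub {q n : ℕ} (hn : n ≠ 0) :
    incExcTerm q n 0 - n * incExcTerm q (n - 1) 0 = 0 := by
  simp [incExcTerm, ← Nat.mul_factorial_pred hn]

lemma incExcTerm_succ_sub {q n : ℕ} (hq : 1 ≤ q) (hn : q ≤ n) (j : ℕ) :
    incExcTerm q n (j + 1) - n * incExcTerm q (n - 1) (j + 1)
        - ((q : ℤ) - 1) * incExcTerm q (n - q) j
      = if (j + 1) * q = n then (q : ℤ) * (-1) ^ (j + 1) else 0 := by
  have absorb := succ_mul_choose_sub_mul_pred hq n j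
  have hsub : n - q - q * j = n - q * (j + 1) := by rw [Nat.mul_succ]; omega
  simp only [incExcTerm]
  rw [choose_sub_mul_pred_succ hq hn, hsub]
  set c₁ := (n - 1 - (j + 1) * (q - 1)).choose (j + 1)
  set c₂ := (n - q - j * (q - 1)).choose j
  rcases lt_or_ge (q * (j + 1)) n with h | h
  · obtain ⟨k, hk⟩ : ∃ k, n - q * (j + 1) = k + 1 := ⟨n - q * (j + 1) - 1, by omega⟩
    have hn' : (n : ℤ) = k + 1 + q * (j + 1) := by norm_cast; omega
    rw [if_neg (by rw [mul_comm]; omega), hk, show n - 1 - q * (j + 1) = k by omega,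
      Nat.factorial_succ, hn']
    rw [hk] at absorb
    have absorb' : ((j + 1 : ℕ) : ℤ) * c₁ = (k + 1 : ℕ) * c₂ := by exact_mod_cast absorb
    push_cast at absorb' ⊢
    linear_combination ((-1 : ℤ) ^ j * q * k.factorial) * absorb'
  · rw [Nat.sub_eq_zero_of_le h, zero_mul, mul_eq_zero] at absorb
    rw [absorb.resolve_left (Nat.succ_ne_zero j), Nat.sub_eq_zero_of_le h,
      Nat.sub_eq_zero_of_le (by omega : q * (j + 1) ≥ n - 1)]
    split_ifs with he
    · have hc₂ : c₂ = 1 := by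
        have := Nat.le_mul_of_pos_right j hq
        rw [Nat.succ_mul] at he
        show (n - q - j * (q - 1)).choose j = 1
        rw [show n - q - j * (q - 1) = j by rw [Nat.mul_sub_one]; omega, Nat.choose_self]
      rw [hc₂]
      push_cast
      ring
    · have hlt : n - q < j * q := by
        rw [mul_comm, Nat.succ_mul] at h
        rw [Nat.succ_mul] at he
        omega
      rw [show c₂ = 0 from choose_sub_mul_pred_eq_zero hlt]
      simp

lemma sum_range_ite_mul_eq {M : Type*} [AddCommMonoid M] {q n K : ℕ} (hq : 0 < q) (hK : n < K)
    (f : ℕ → M) :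
    ∑ j ∈ range K, (if j * q = n then f j else 0) = if q ∣ n then f (n / q) else 0 := by
  have hiff : ∀ j, j * q = n ↔ q ∣ n ∧ j = n / q := fun j =>
    ⟨by rintro rfl; exact ⟨dvd_mul_left q j, (Nat.mul_div_cancel j hq).symm⟩,
      by rintro ⟨⟨c, rfl⟩, rfl⟩; rw [Nat.mul_div_cancel_left c hq, mul_comm]⟩
  simp_rw [hiff]
  split_ifs with hd
  · simp only [hd, true_and]
    rw [sum_ite_eq', if_pos (mem_range.2 ((Nat.div_le_self n q).trans_lt hK))]
  · simp [hd]

theorem stmt9 (q n : ℕ) (hq : 1 ≤ q) (hn : q ≤ n) :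
    (b q n : ℤ) - (n : ℤ) * (b q (n - 1) : ℤ) =
      ((q : ℤ) - 1) * (b q (n - q) : ℤ) +
        if q ∣ n then (q : ℤ) * (-1 : ℤ) ^ (n / q) else 0 := by
  have key := sum_congr rfl fun j (_ : j ∈ range (n + 1)) => incExcTerm_succ_sub hq hn j
  rw [sum_sub_distrib, sum_sub_distrib, ← mul_sum, ← mul_sum] at key
  rw [b_eq_sum_incExcTerm hq (K := n + 2) (by omega),
    b_eq_sum_incExcTerm hq (K := n + 2) (by omega),
    b_eq_sum_incExcTerm hq (K := n + 1) (by omega), sum_range_succ' (incExcTerm q n),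
    sum_range_succ' (incExcTerm q (n - 1)),
    ← sum_range_ite_mul_eq hq (K := n + 2) (by omega) fun j => (q : ℤ) * (-1) ^ j,
    sum_range_succ' (fun j => if j * q = n then (q : ℤ) * (-1) ^ j else 0), if_neg (by omega)]
  linear_combination key + incExcTerm_zero_sub (q := q) (n := n) (by omega)
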